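/- arXiv:q-alg/9604014 — 7 statements merged into one kernel-verified Lean document; each statement's English description precedes it below -/
import Mathlib

section
/- For any three 2×2 complex matrices A, B, C (not necessarily of determinant 1), tr(A)tr(B)tr(C) − tr(AB)tr(C) − tr(AC)tr(B) − tr(BC)tr(A) + tr(ABC) + tr(ACB) = 0. -/
theorem procesi_three (A B C : Matrix (Fin 2) (Fin 2) ℂ) :
    Matrix.trace A * Matrix.trace B * Matrix.trace C
      - Matrix.trace (A * B) * Matrix.trace C
      - Matrix.trace (A * C) * Matrix.trace B
      - Matrix.trace (B * C) * Matrix.trace A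
      + Matrix.trace (A * B * C) + Matrix.trace (A * C * B) = 0 := by
  simp [Matrix.trace, Matrix.mul_apply, Matrix.diag, Fin.sum_univ_two]
  ring
end

section
/- Let A₁, A₂, A₃, A₄ and B₁, B₂, B₃, B₄ be arbitrary 2×2 complex matrices. Then the determinant of the 4×4 matrix whose (i,j) entry is 2·tr(AᵢBⱼ) − tr(Aᵢ)·tr(Bⱼ) is zero. -/
open Matrix

theorem det_two_trace_identity (A B : Fin 4 → Matrix (Fin 2) (Fin 2) ℂ) :
    Matrix.det (Matrix.of fun i j =>
      2 * Matrix.trace (A i * B j) - Matrix.trace (A i) * Matrix.trace (B j)) = 0 := by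
  set G : Matrix (Fin 4) (Fin 4) ℂ := !![1,0,0,-1; 0,0,2,0; 0,2,0,0; -1,0,0,1] with hG
  have hdetG : G.det = 0 := by
    simp [hG, Matrix.det_succ_row_zero, Fin.sum_univ_succ, Matrix.cons_val_succ,
      show (Fin.castSucc 2 : Fin 4) = 2 from rfl]
    norm_num [show (Fin.succAbove 3 2 : Fin 4) = 2 from rfl,
      show (![0, 0, 2, 0] : Fin 4 → ℂ) 2 = 2 from rfl]
  set e : Matrix (Fin 2) (Fin 2) ℂ → Fin 4 → ℂ :=
    fun M => ![M 0 0, M 0 1, M 1 0, M 1 1] with he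
  set P : Matrix (Fin 4) (Fin 4) ℂ := Matrix.of fun i k => e (A i) k with hP
  set Q : Matrix (Fin 4) (Fin 4) ℂ := Matrix.of fun j k => e (B j) k with hQ
  have hfac : (Matrix.of fun i j =>
      2 * Matrix.trace (A i * B j) - Matrix.trace (A i) * Matrix.trace (B j))
      = P * G * Qᵀ := by
    ext i j
    simp [hP, hQ, hG, he, Matrix.mul_apply, Matrix.trace_fin_two,
      Fin.sum_univ_four, Fin.sum_univ_two, Matrix.transpose_apply]
    ring
  rw [hfac, Matrix.det_mul, Matrix.det_mul, hdetG]
  ring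
end

section
/- Let A₁, A₂, A₃, A₄ and B₁, B₂, B₃, B₄ be arbitrary 2×2 complex matrices. Then det((tr(AᵢBⱼ))ᵢⱼ) = −det(M(A₁,…,A₄))·det(M(B₁,…,B₄)), where M(C₁,…,C₄) is the 4×4 matrix whose i-th row lists the four entries of Cᵢ. -/
open Matrix

/-- The 4×4 matrix whose `i`-th row lists the entries of the 2×2 matrix `A i`. -/
def M (A : Fin 4 → Matrix (Fin 2) (Fin 2) ℂ) : Matrix (Fin 4) (Fin 4) ℂ :=
  Matrix.of fun i j => ![A i 0 0, A i 0 1, A i 1 0, A i 1 1] j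

def P : Matrix (Fin 4) (Fin 4) ℂ :=
  !![1,0,0,0; 0,0,1,0; 0,1,0,0; 0,0,0,1]

lemma detP : P.det = -1 := by
  simp [P, Matrix.det_succ_row_zero, Fin.sum_univ_succ]

theorem det_trace_matrix (A B : Fin 4 → Matrix (Fin 2) (Fin 2) ℂ) :
    Matrix.det (Matrix.of fun i j => Matrix.trace (A i * B j))
      = -(Matrix.det (M A) * Matrix.det (M B)) := by
  have key : (Matrix.of fun i j => Matrix.trace (A i * B j))
      = M A * P * (M B)ᵀ := by
    ext i j
    simp only [Matrix.mul_apply, Matrix.transpose_apply, Matrix.trace,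
      Matrix.diag, Matrix.of_apply, M, P, Fin.sum_univ_four, Fin.sum_univ_two]
    simp [Matrix.mul_apply, Fin.sum_univ_two, Matrix.vecHead, Matrix.vecTail]
    ring
  rw [key, Matrix.det_mul, Matrix.det_mul, Matrix.det_transpose, detP]
  ring
end

section
/- Let A₁, A₂, A₃, A₄ and B₁, B₂, B₃, B₄ be arbitrary 2×2 complex matrices with A₄ = B₄ = I. Then det((tr(AᵢBⱼ))ᵢⱼ) = −(tr(A₁A₂A₃) − tr(A₁A₃A₂))·(tr(B₁B₂B₃) − tr(B₁B₃B₂)). -/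
open Matrix

lemma det_four {R : Type*} [CommRing R]
    (a b c d e f g h i j k l m n o p : R) :
    Matrix.det !![a,b,c,d; e,f,g,h; i,j,k,l; m,n,o,p] =
      a*(f*(k*p-l*o) - g*(j*p-l*n) + h*(j*o-k*n))
      - b*(e*(k*p-l*o) - g*(i*p-l*m) + h*(i*o-k*m))
      + c*(e*(j*p-l*n) - f*(i*p-l*m) + h*(i*n-j*m))
      - d*(e*(j*o-k*n) - f*(i*o-k*m) + g*(i*n-j*m)) := by
  simp [Matrix.det_succ_row_zero, Fin.sum_univ_succ, Fin.succAbove, Fin.castSucc, Fin.castAdd, Fin.castLE]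
  ring

set_option maxHeartbeats 1000000 in
theorem det_trace_matrix_identity (A B : Fin 4 → Matrix (Fin 2) (Fin 2) ℂ)
    (hA : A 3 = 1) (hB : B 3 = 1) :
    Matrix.det (Matrix.of fun i j => Matrix.trace (A i * B j))
      = -((Matrix.trace (A 0 * A 1 * A 2) - Matrix.trace (A 0 * A 2 * A 1))
          * (Matrix.trace (B 0 * B 1 * B 2) - Matrix.trace (B 0 * B 2 * B 1))) := by
  have hM : (Matrix.of fun i j => Matrix.trace (A i * B j)) =
      !![Matrix.trace (A 0 * B 0), Matrix.trace (A 0 * B 1), Matrix.trace (A 0 * B 2), Matrix.trace (A 0 * B 3);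
         Matrix.trace (A 1 * B 0), Matrix.trace (A 1 * B 1), Matrix.trace (A 1 * B 2), Matrix.trace (A 1 * B 3);
         Matrix.trace (A 2 * B 0), Matrix.trace (A 2 * B 1), Matrix.trace (A 2 * B 2), Matrix.trace (A 2 * B 3);
         Matrix.trace (A 3 * B 0), Matrix.trace (A 3 * B 1), Matrix.trace (A 3 * B 2), Matrix.trace (A 3 * B 3)] := by
    ext i j
    fin_cases i <;> fin_cases j <;> rfl
  rw [hM, det_four]
  simp only [hA, hB, Matrix.one_mul, Matrix.mul_one, Matrix.trace_fin_two,
    Matrix.mul_apply, Fin.sum_univ_two, Matrix.one_apply_eq]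
  ring
end

section
/- For arbitrary 2×2 complex matrices X₁, X₂, X₃ and Y₁, Y₂, Y₃, one has (tr(X₁X₂X₃) − tr(X₁X₃X₂))·(2tr(Y₁Y₂Y₃) + tr(Y₁)tr(Y₂)tr(Y₃) − tr(Y₁)tr(Y₂Y₃) − tr(Y₂)tr(Y₁Y₃) − tr(Y₃)tr(Y₁Y₂)) = det of the 4×4 matrix whose rows are (tr(Xᵢ), tr(XᵢY₁), tr(XᵢY₂), tr(XᵢY₃)) for i = 1, 2, 3, and (2, tr(Y₁), tr(Y₂), tr(Y₃)). -/
open Matrix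

lemma det4 (M : Matrix (Fin 4) (Fin 4) ℂ) : M.det =
    M 0 0 * (M 1 1 * (M 2 2 * M 3 3 - M 2 3 * M 3 2) - M 1 2 * (M 2 1 * M 3 3 - M 2 3 * M 3 1) + M 1 3 * (M 2 1 * M 3 2 - M 2 2 * M 3 1))
  - M 0 1 * (M 1 0 * (M 2 2 * M 3 3 - M 2 3 * M 3 2) - M 1 2 * (M 2 0 * M 3 3 - M 2 3 * M 3 0) + M 1 3 * (M 2 0 * M 3 2 - M 2 2 * M 3 0))
  + M 0 2 * (M 1 0 * (M 2 1 * M 3 3 - M 2 3 * M 3 1) - M 1 1 * (M 2 0 * M 3 3 - M 2 3 * M 3 0) + M 1 3 * (M 2 0 * M 3 1 - M 2 1 * M 3 0))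
  - M 0 3 * (M 1 0 * (M 2 1 * M 3 2 - M 2 2 * M 3 1) - M 1 1 * (M 2 0 * M 3 2 - M 2 2 * M 3 0) + M 1 2 * (M 2 0 * M 3 1 - M 2 1 * M 3 0)) := by
  simp [Matrix.det_succ_row_zero, Fin.sum_univ_succ, Matrix.det_fin_three,
    show (Fin.succ 2 : Fin 4) = 3 from rfl, show (Fin.castSucc 2 : Fin 4) = 2 from rfl,
    show Fin.succAbove (1:Fin 4) 2 = 3 from rfl, show Fin.succAbove (2:Fin 4) 2 = 3 from rfl, show Fin.succAbove (3:Fin 4) 2 = 2 from rfl]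
  ring

set_option maxHeartbeats 1000000 in
theorem procesi_q4 (X₁ X₂ X₃ Y₁ Y₂ Y₃ : Matrix (Fin 2) (Fin 2) ℂ) :
    (Matrix.trace (X₁ * X₂ * X₃) - Matrix.trace (X₁ * X₃ * X₂))
      * (2 * Matrix.trace (Y₁ * Y₂ * Y₃)
          + Matrix.trace Y₁ * Matrix.trace Y₂ * Matrix.trace Y₃
          - Matrix.trace Y₁ * Matrix.trace (Y₂ * Y₃)
          - Matrix.trace Y₂ * Matrix.trace (Y₁ * Y₃)
          - Matrix.trace Y₃ * Matrix.trace (Y₁ * Y₂))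
    = Matrix.det (Matrix.of
        ![![Matrix.trace X₁, Matrix.trace (X₁ * Y₁), Matrix.trace (X₁ * Y₂), Matrix.trace (X₁ * Y₃)],
          ![Matrix.trace X₂, Matrix.trace (X₂ * Y₁), Matrix.trace (X₂ * Y₂), Matrix.trace (X₂ * Y₃)],
          ![Matrix.trace X₃, Matrix.trace (X₃ * Y₁), Matrix.trace (X₃ * Y₂), Matrix.trace (X₃ * Y₃)],
          ![2, Matrix.trace Y₁, Matrix.trace Y₂, Matrix.trace Y₃]]) := by
  rw [det4]
  simp only [Matrix.of_apply, Matrix.cons_val', Matrix.cons_val_zero, Matrix.cons_val_one,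
    Matrix.head_cons, Matrix.cons_val_fin_one, Matrix.empty_val', Matrix.cons_val_two,
    Matrix.tail_cons, Matrix.cons_val_three, Matrix.head_fin_const,
    Matrix.trace_fin_two, Matrix.mul_apply, Fin.sum_univ_two]
  ring
end

section
/- For all matrices A, B, C, D in SL(2,ℂ): −2tr(ABCD) + tr(AC)tr(B)tr(D) − tr(A)tr(B)tr(CD) − tr(B)tr(C)tr(DA) − tr(AC)tr(BD) + tr(AB)tr(CD) + tr(BC)tr(DA) − tr(ACB)tr(D) + tr(A)tr(BCD) + tr(B)tr(CDA) + tr(C)tr(DAB) = 0. -/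
noncomputable def tr (A : Matrix.SpecialLinearGroup (Fin 2) ℂ) : ℂ :=
  Matrix.trace (A : Matrix (Fin 2) (Fin 2) ℂ)

theorem length_four_reduction (A B C D : Matrix.SpecialLinearGroup (Fin 2) ℂ) :
    -2 * tr (A * B * C * D)
      + tr (A * C) * tr B * tr D
      - tr A * tr B * tr (C * D)
      - tr B * tr C * tr (D * A)
      - tr (A * C) * tr (B * D)
      + tr (A * B) * tr (C * D)
      + tr (B * C) * tr (D * A)
      - tr (A * C * B) * tr D
      + tr A * tr (B * C * D)
      + tr B * tr (C * D * A)
      + tr C * tr (D * A * B) = 0 := by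
  simp only [tr, Matrix.SpecialLinearGroup.coe_mul, Matrix.trace_fin_two,
    Matrix.mul_apply, Fin.sum_univ_two]
  ring
end

section
/- Let A₁, A₂, A₃, A₄ and B₁, B₂, B₃, B₄ be arbitrary 2×2 complex matrices. Let J be the 4×4 permutation matrix swapping coordinates 2 and 3, and let J* be the 4×4 matrix with rows (0,0,0,1), (0,−1,0,0), (0,0,−1,0), (1,0,0,0). Then the 4×4 matrix with (i,j) entry tr(AᵢBⱼ) − tr(Aᵢ)tr(Bⱼ) equals −M(A₁,…,A₄)·J·J*·M(B₁,…,B₄)ᵀ, where M(C₁,…,C₄) is the 4×4 matrix whose i-th row lists the entries of Cᵢ. -/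
open Matrix

/-- The permutation matrix swapping coordinates 2 and 3. -/
def Jmat : Matrix (Fin 4) (Fin 4) ℂ :=
  !![1, 0, 0, 0; 0, 0, 1, 0; 0, 1, 0, 0; 0, 0, 0, 1]

/-- The matrix `J*`. -/
def Jstar : Matrix (Fin 4) (Fin 4) ℂ :=
  !![0, 0, 0, 1; 0, -1, 0, 0; 0, 0, -1, 0; 1, 0, 0, 0]

theorem trace_minus_product_factorization (A B : Fin 4 → Matrix (Fin 2) (Fin 2) ℂ) :
    (Matrix.of fun i j => Matrix.trace (A i * B j) - Matrix.trace (A i) * Matrix.trace (B j))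
      = -(M A * Jmat * Jstar * (M B)ᵀ) := by
  ext i j
  simp [M, Jmat, Jstar, Matrix.mul_apply, Matrix.trace, Matrix.diag, Fin.sum_univ_succ,
    Matrix.of_apply]
  ring
end
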